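/- arXiv:2310.19064 — 4 statements merged into one kernel-verified Lean document; each statement's English description precedes it below -/
import Mathlib

section
/- For every binary hypothesis class H and every natural number w, AL_w(H) ≥ min{w, L(H)}, where L(H) is the Littlestone dimension of H. -/
/-- `ALShatter H w d` : the hypothesis class `H` shatters some Apple Littlestone tree of
width `w` and depth `d`. Width `0` means the path has already ended (took the maximal
number of right/1 edges), in which case shattering only requires a consistent hypothesis. -/
def ALShatter {X : Type*} : Set (X → Bool) → ℕ → ℕ → Prop
  | H, _, 0 => H.Nonempty
  | H, 0, _ + 1 => H.Nonempty
  | H, w + 1, d + 1 =>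
      ∃ x : X, ALShatter {h | h ∈ H ∧ h x = false} (w + 1) d ∧
               ALShatter {h | h ∈ H ∧ h x = true} w d

/-- The Apple Littlestone dimension of `H` at width `w`. -/
noncomputable def ALdim {X : Type*} (H : Set (X → Bool)) (w : ℕ) : ℕ∞ :=
  sSup {d : ℕ∞ | ∃ n : ℕ, ALShatter H w n ∧ d = (n : ℕ∞)}

/-- `LShatter H d` : `H` shatters some Littlestone tree of depth `d`. -/
def LShatter {X : Type*} : Set (X → Bool) → ℕ → Prop
  | H, 0 => H.Nonempty
  | H, d + 1 =>
      ∃ x : X, LShatter {h | h ∈ H ∧ h x = false} d ∧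
               LShatter {h | h ∈ H ∧ h x = true} d

/-- The Littlestone dimension of `H`. -/
noncomputable def Ldim {X : Type*} (H : Set (X → Bool)) : ℕ∞ :=
  sSup {d : ℕ∞ | ∃ n : ℕ, LShatter H n ∧ d = (n : ℕ∞)}

/-- The Effective width of `H`: the least width `w ≥ 1` at which the
Apple Littlestone dimension is finite. -/
noncomputable def EffW {X : Type*} (H : Set (X → Bool)) : ℕ∞ :=
  sInf {w : ℕ∞ | ∃ n : ℕ, 1 ≤ n ∧ ALdim H n ≠ ⊤ ∧ w = (n : ℕ∞)}


theorem lshatter_mono : ∀ (n : ℕ) {X : Type*} {H H' : Set (X → Bool)},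
    H' ⊆ H → LShatter H' n → LShatter H n
  | 0, _, _, _, hsub, h => h.mono hsub
  | n + 1, _, _, _, hsub, ⟨x, l, r⟩ =>
      ⟨x, lshatter_mono n (fun h hh => ⟨hsub hh.1, hh.2⟩) l,
          lshatter_mono n (fun h hh => ⟨hsub hh.1, hh.2⟩) r⟩

theorem lshatter_step {X : Type*} {H : Set (X → Bool)} {n : ℕ}
    (h : LShatter H (n + 1)) : LShatter H n := by
  obtain ⟨x, l, _⟩ := h
  exact lshatter_mono n (fun h hh => hh.1) l

theorem lshatter_le {X : Type*} {H : Set (X → Bool)} {m n : ℕ}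
    (hmn : m ≤ n) (h : LShatter H n) : LShatter H m := by
  induction n with
  | zero => simpa [Nat.le_zero.mp hmn]
  | succ k ih =>
    rcases Nat.lt_or_ge m (k + 1) with hm | hm
    · exact ih (Nat.lt_succ_iff.mp hm) (lshatter_step h)
    · have : m = k + 1 := le_antisymm hmn hm
      simpa [this]

theorem lshatter_to_al : ∀ (n : ℕ) (w : ℕ) {X : Type*} (H : Set (X → Bool)),
    n ≤ w → LShatter H n → ALShatter H w n
  | 0, w, _, H, _, h => by cases w <;> exact h
  | n + 1, 0, _, _, hw, _ => absurd hw (by omega)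
  | n + 1, w + 1, _, H, hw, ⟨x, l, r⟩ =>
      ⟨x, lshatter_to_al n (w + 1) _ (by omega) l,
          lshatter_to_al n w _ (by omega) r⟩

/-- AL_w(H) ≥ min{w, L(H)}. -/
theorem ALdim_ge_min_width_Ldim {X : Type*} (H : Set (X → Bool)) (w : ℕ) :
    min (w : ℕ∞) (Ldim H) ≤ ALdim H w := by
  unfold Ldim ALdim
  rcases le_or_gt (sSup {d : ℕ∞ | ∃ n : ℕ, LShatter H n ∧ d = (n : ℕ∞)}) (w : ℕ∞) with hle | hlt
  · rw [min_eq_right hle]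
    apply sSup_le
    rintro d ⟨n, hn, rfl⟩
    have hnw : (n : ℕ∞) ≤ (w : ℕ∞) := le_trans (le_sSup (show (n:ℕ∞) ∈ {d : ℕ∞ | ∃ m : ℕ, LShatter H m ∧ d = (m : ℕ∞)} from ⟨n, hn, rfl⟩)) hle
    have hnw' : n ≤ w := by exact_mod_cast hnw
    exact le_sSup ⟨n, lshatter_to_al n w H hnw' hn, rfl⟩
  · rw [min_eq_left hlt.le]
    obtain ⟨d, ⟨n, hn, rfl⟩, hwn⟩ := lt_sSup_iff.mp hlt
    have hwn' : w ≤ n := by exact_mod_cast hwn.le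
    exact le_sSup ⟨w, lshatter_to_al w w H le_rfl (lshatter_le hwn' hn), rfl⟩
end

section
/- For every binary hypothesis class H, the Effective width W(H) is finite if and only if the Littlestone dimension L(H) is finite. -/
lemma LShatter_nonempty {X : Type*} : ∀ {d : ℕ} {H : Set (X → Bool)},
    LShatter H d → H.Nonempty
  | 0, _, h => h
  | d + 1, _, ⟨x, hl, _⟩ => by
      obtain ⟨h, hh, _⟩ := LShatter_nonempty hl
      exact ⟨h, hh⟩

lemma LShatter_mono {X : Type*} : ∀ {d : ℕ} {H H' : Set (X → Bool)},
    H ⊆ H' → LShatter H d → LShatter H' d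
  | 0, _, _, hsub, h => h.mono hsub
  | d + 1, H, H', hsub, ⟨x, hl, hr⟩ => by
      have sub1 : {h | h ∈ H ∧ h x = false} ⊆ {h | h ∈ H' ∧ h x = false} :=
        fun h hh => ⟨hsub hh.1, hh.2⟩
      have sub2 : {h | h ∈ H ∧ h x = true} ⊆ {h | h ∈ H' ∧ h x = true} :=
        fun h hh => ⟨hsub hh.1, hh.2⟩
      exact ⟨x, LShatter_mono sub1 hl, LShatter_mono sub2 hr⟩

lemma LShatter_succ {X : Type*} : ∀ {d : ℕ} {H : Set (X → Bool)},
    LShatter H (d + 1) → LShatter H d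
  | 0, _, h => LShatter_nonempty h
  | d + 1, H, ⟨x, hl, hr⟩ => ⟨x, LShatter_succ hl, LShatter_succ hr⟩

lemma LShatter_of_le {X : Type*} {H : Set (X → Bool)} {e d : ℕ} (hle : e ≤ d)
    (h : LShatter H d) : LShatter H e := by
  induction d with
  | zero => simpa [Nat.le_zero.mp hle] using h
  | succ d ih =>
      rcases Nat.lt_or_ge e (d + 1) with h1 | h1
      · exact ih (Nat.lt_succ_iff.mp h1) (LShatter_succ h)
      · have : e = d + 1 := le_antisymm hle h1
        simpa [this] using h

lemma LShatter_to_ALShatter {X : Type*} : ∀ {d w : ℕ} {H : Set (X → Bool)},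
    LShatter H d → ALShatter H w d
  | 0, 0, _, h => h
  | 0, _ + 1, _, h => h
  | _ + 1, 0, _, h => LShatter_nonempty h
  | d + 1, w + 1, H, ⟨x, hl, hr⟩ =>
      ⟨x, LShatter_to_ALShatter hl, LShatter_to_ALShatter hr⟩

lemma ALShatter_to_LShatter {X : Type*} : ∀ {d w : ℕ} {H : Set (X → Bool)},
    ALShatter H w d → LShatter H (min w d)
  | 0, 0, _, h => h
  | 0, _ + 1, _, h => h
  | _ + 1, 0, _, h => h
  | d + 1, w + 1, H, ⟨x, hl, hr⟩ => by
      have hl' : LShatter {h | h ∈ H ∧ h x = false} (min w d) :=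
        LShatter_of_le (le_trans (min_le_min (Nat.le_succ w) le_rfl) le_rfl)
          (ALShatter_to_LShatter hl)
      have hr' : LShatter {h | h ∈ H ∧ h x = true} (min w d) :=
        ALShatter_to_LShatter hr
      have : LShatter H (min w d + 1) := ⟨x, hl', hr'⟩
      simpa [Nat.succ_min_succ] using this

lemma sSup_ne_top_iff_bdd (P : ℕ → Prop) :
    sSup {d : ℕ∞ | ∃ n : ℕ, P n ∧ d = (n : ℕ∞)} ≠ ⊤ ↔ ∃ N : ℕ, ∀ n, P n → n ≤ N := by
  constructor
  · intro h
    set s := sSup {d : ℕ∞ | ∃ n : ℕ, P n ∧ d = (n : ℕ∞)} with hs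
    lift s to ℕ using h with N hN
    refine ⟨N, fun n hn => ?_⟩
    have h1 : (n : ℕ∞) ≤ s := le_sSup ⟨n, hn, rfl⟩
    rw [← hN] at h1
    exact_mod_cast h1
  · rintro ⟨N, hN⟩
    have : sSup {d : ℕ∞ | ∃ n : ℕ, P n ∧ d = (n : ℕ∞)} ≤ (N : ℕ∞) := by
      apply sSup_le
      rintro d ⟨n, hn, rfl⟩
      exact_mod_cast hN n hn
    exact ne_top_of_le_ne_top (WithTop.natCast_ne_top N) this

/-- the Effective width W(H) is finite iff the Littlestone dimension L(H) is. -/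
theorem effW_finite_iff_Ldim_finite {X : Type*} (H : Set (X → Bool)) :
    EffW H ≠ ⊤ ↔ Ldim H ≠ ⊤ := by
  constructor
  · intro h
    have hne : {w : ℕ∞ | ∃ n : ℕ, 1 ≤ n ∧ ALdim H n ≠ ⊤ ∧ w = (n : ℕ∞)}.Nonempty := by
      by_contra hemp
      rw [Set.not_nonempty_iff_eq_empty] at hemp
      exact h (by simp [EffW, hemp])
    obtain ⟨w, n, hn1, hfin, rfl⟩ := hne
    rw [ALdim, sSup_ne_top_iff_bdd] at hfin
    obtain ⟨N, hN⟩ := hfin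
    rw [Ldim, sSup_ne_top_iff_bdd]
    exact ⟨N, fun d hd => hN d (LShatter_to_ALShatter hd)⟩
  · intro h
    rw [Ldim, sSup_ne_top_iff_bdd] at h
    obtain ⟨N, hN⟩ := h
    have hfin : ALdim H (N + 1) ≠ ⊤ := by
      rw [ALdim, sSup_ne_top_iff_bdd]
      refine ⟨N, fun d hd => ?_⟩
      have := hN _ (ALShatter_to_LShatter hd)
      omega
    have : EffW H ≤ ((N + 1 : ℕ) : ℕ∞) :=
      sInf_le ⟨N + 1, Nat.le_add_left 1 N, hfin, rfl⟩
    exact ne_top_of_le_ne_top (WithTop.natCast_ne_top _) this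
end

section
/- For every binary hypothesis class H with AL_w(H) < ∞ for some w ∈ ℕ, there exists a deterministic online learner in the realizable full-information setting that makes at most w − 1 false negative mistakes and at most AL_w(H) false positive mistakes on any stream labeled by a hypothesis in H. -/
/- ### Auxiliary material -/

lemma alshatter_zero {X : Type*} (V : Set (X → Bool)) (w : ℕ) :
    ALShatter V w 0 ↔ V.Nonempty := by cases w <;> exact Iff.rfl

lemma alshatter_wzero {X : Type*} (V : Set (X → Bool)) (n : ℕ) :
    ALShatter V 0 n ↔ V.Nonempty := by cases n <;> exact Iff.rfl

lemma alshatter_succ_succ {X : Type*} (V : Set (X → Bool)) (w d : ℕ) :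
    ALShatter V (w+1) (d+1) ↔ ∃ x : X, ALShatter {h | h ∈ V ∧ h x = false} (w + 1) d ∧
               ALShatter {h | h ∈ V ∧ h x = true} w d := Iff.rfl

lemma alshatter_nonempty {X : Type*} : ∀ (d w : ℕ) (V : Set (X → Bool)),
    ALShatter V w d → V.Nonempty := by
  intro d
  induction d with
  | zero => intro w V h; exact (alshatter_zero V w).mp h
  | succ d ih =>
    intro w V h
    cases w with
    | zero => exact h
    | succ w =>
      obtain ⟨x, hl, -⟩ := h
      obtain ⟨g, hg, -⟩ := ih (w+1) _ hl
      exact ⟨g, hg⟩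

lemma alshatter_mono {X : Type*} : ∀ (d w : ℕ) (V W : Set (X → Bool)), V ⊆ W →
    ALShatter V w d → ALShatter W w d := by
  intro d
  induction d with
  | zero => intro w V W hVW h
            exact (alshatter_zero W w).mpr (((alshatter_zero V w).mp h).mono hVW)
  | succ d ih =>
    intro w V W hVW h
    cases w with
    | zero => exact (alshatter_wzero W _).mpr (((alshatter_wzero V _).mp h).mono hVW)
    | succ w =>
      obtain ⟨x, hl, hr⟩ := h
      exact ⟨x, ih _ _ _ (fun g hg => ⟨hVW hg.1, hg.2⟩) hl,
             ih _ _ _ (fun g hg => ⟨hVW hg.1, hg.2⟩) hr⟩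

lemma alshatter_pred {X : Type*} : ∀ (d w : ℕ) (V : Set (X → Bool)),
    ALShatter V w (d+1) → ALShatter V w d := by
  intro d
  induction d with
  | zero => intro w V h; exact (alshatter_zero V w).mpr (alshatter_nonempty _ _ _ h)
  | succ d ih =>
    intro w V h
    cases w with
    | zero => exact h
    | succ w =>
      obtain ⟨x, hl, hr⟩ := h
      exact ⟨x, ih _ _ hl, ih _ _ hr⟩

lemma alshatter_of_le {X : Type*} {V : Set (X → Bool)} {w n m : ℕ} (hnm : n ≤ m)
    (h : ALShatter V w m) : ALShatter V w n := by
  induction m with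
  | zero => exact (Nat.le_zero.mp hnm) ▸ h
  | succ m ih =>
    rcases eq_or_lt_of_le hnm with rfl | hlt
    · exact h
    · exact ih (Nat.lt_succ_iff.mp hlt) (alshatter_pred _ _ _ h)

lemma alshatter_of_sep {X : Type*} {V : Set (X → Bool)} {w d : ℕ} {x : X} {b : Bool}
    (h : ALShatter {g | g ∈ V ∧ g x = b} w d) : ALShatter V w d :=
  alshatter_mono _ _ _ _ (fun g hg => hg.1) h

open Classical in
noncomputable def ALpredict {X : Type*} (V : Set (X → Bool)) (k : ℕ) (x : X) : Bool :=
  if k ≤ 1 then decide (∃ g ∈ V, g x = true)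
  else decide (∀ n, ALShatter V k n → ALShatter {g | g ∈ V ∧ g x = true} (k - 1) n)

open Classical in
lemma alpredict_small {X : Type*} {V : Set (X → Bool)} {k : ℕ} {x : X} (hk : k ≤ 1) :
    ALpredict V k x = true ↔ ∃ g ∈ V, g x = true := by
  simp [ALpredict, hk]

open Classical in
lemma alpredict_big {X : Type*} {V : Set (X → Bool)} {k : ℕ} {x : X} (hk : ¬ k ≤ 1) :
    ALpredict V k x = true ↔
      ∀ n, ALShatter V k n → ALShatter {g | g ∈ V ∧ g x = true} (k - 1) n := by
  simp [ALpredict, hk]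

/-- One step of the learner's state update. -/
noncomputable def ALstep {X : Type*} (s : Set (X → Bool) × ℕ) (p : X × Bool) :
    Set (X → Bool) × ℕ :=
  ({g | g ∈ s.1 ∧ g p.1 = p.2},
   if ALpredict s.1 s.2 p.1 = false ∧ p.2 = true then s.2 - 1 else s.2)

/-- The learner's state after processing a history. -/
noncomputable def ALstate {X : Type*} (H : Set (X → Bool)) (w : ℕ) (l : List (X × Bool)) :
    Set (X → Bool) × ℕ := l.foldl ALstep (H, w)

/-- The deterministic learner. -/
noncomputable def ALearner {X : Type*} (H : Set (X → Bool)) (w : ℕ)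
    (l : List (X × Bool)) (z : X) : Bool :=
  ALpredict (ALstate H w l).1 (ALstate H w l).2 z

lemma card_filter_range_succ (Q : ℕ → Prop) [DecidablePred Q] (T : ℕ) :
    ((Finset.range (T+1)).filter Q).card
      = ((Finset.range T).filter Q).card + (if Q T then 1 else 0) := by
  rw [Finset.range_add_one, Finset.filter_insert]
  by_cases hQ : Q T
  · rw [if_pos hQ, if_pos hQ, Finset.card_insert_of_notMem (by simp)]
  · rw [if_neg hQ, if_neg hQ, Nat.add_zero]

/-- The one-step invariant of the learner. -/
lemma ALstep_key {X : Type*} {V : Set (X → Bool)} {k d₀ c : ℕ} {h : X → Bool} {xT : X}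
    (hhV : h ∈ V) (hk1 : 1 ≤ k)
    (hpot : ∀ n, ALShatter V k n → n + c ≤ d₀) :
    h ∈ (ALstep (V, k) (xT, h xT)).1 ∧
    1 ≤ (ALstep (V, k) (xT, h xT)).2 ∧
    (ALstep (V, k) (xT, h xT)).2
        + (if ALpredict V k xT = false ∧ h xT = true then 1 else 0) = k ∧
    ∀ n, ALShatter (ALstep (V, k) (xT, h xT)).1 (ALstep (V, k) (xT, h xT)).2 n →
      n + ((if ALpredict V k xT = true ∧ h xT = false then 1 else 0) + c) ≤ d₀ := by
  rcases Bool.eq_false_or_eq_true (ALpredict V k xT) with hp | hp <;>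
    rcases Bool.eq_false_or_eq_true (h xT) with hy | hy
  · -- pred = true, label = true : correct round
    refine ⟨⟨hhV, rfl⟩, ?_, ?_, ?_⟩
    · simp only [ALstep, hp, hy]
      simpa using hk1
    · simp [ALstep, hp, hy]
    · intro n hn
      simp only [ALstep, hp, hy] at hn
      simp only [hp, hy]
      norm_num at hn ⊢
      have := hpot n (alshatter_of_sep hn)
      omega
  · -- pred = true, label = false : false positive
    refine ⟨⟨hhV, rfl⟩, ?_, ?_, ?_⟩
    · simp only [ALstep, hp, hy]
      simpa using hk1
    · simp [ALstep, hp, hy]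
    · intro n hn
      simp only [ALstep, hp, hy] at hn
      simp only [hp, hy]
      norm_num at hn ⊢
      have hVn : ALShatter V k n := alshatter_of_sep hn
      by_cases hk : k ≤ 1
      · have hk1' : k = 1 := by omega
        obtain ⟨g', hgV, hgt⟩ := (alpredict_small hk).mp hp
        have hVt : ALShatter {g | g ∈ V ∧ g xT = true} 0 n :=
          (alshatter_wzero _ _).mpr ⟨g', hgV, hgt⟩
        rw [hk1'] at hn
        have hcomb : ALShatter V (0 + 1) (n + 1) :=
          (alshatter_succ_succ V 0 n).mpr ⟨xT, hn, hVt⟩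
        have := hpot (n + 1) (by rw [hk1']; exact hcomb)
        omega
      · have htr := (alpredict_big hk).mp hp n hVn
        obtain ⟨j, rfl⟩ : ∃ j, k = j + 2 := ⟨k - 2, by omega⟩
        have htr' : ALShatter {g | g ∈ V ∧ g xT = true} (j + 1) n := by
          simpa using htr
        have hcomb : ALShatter V (j + 1 + 1) (n + 1) :=
          (alshatter_succ_succ V (j + 1) n).mpr ⟨xT, hn, htr'⟩
        have := hpot (n + 1) hcomb
        omega
  · -- pred = false, label = true : false negative
    have hk2 : 2 ≤ k := by
      rcases Nat.lt_or_ge k 2 with hk | hk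
      · exfalso
        have hT : ALpredict V k xT = true := (alpredict_small (by omega)).mpr ⟨h, hhV, hy⟩
        rw [hT] at hp
        exact absurd hp (by simp)
      · exact hk
    refine ⟨⟨hhV, rfl⟩, ?_, ?_, ?_⟩
    · simp only [ALstep, hp, hy]
      norm_num
      omega
    · simp only [ALstep, hp, hy]
      norm_num
      omega
    · intro n hn
      simp only [ALstep, hp, hy] at hn
      simp only [hp, hy]
      norm_num at hn ⊢
      have hnall : ¬ ∀ m, ALShatter V k m → ALShatter {g | g ∈ V ∧ g xT = true} (k - 1) m := by
        intro hc
        have h2 := (alpredict_big (by omega : ¬ k ≤ 1)).mpr hc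
        rw [h2] at hp
        exact absurd hp (by simp)
      push_neg at hnall
      obtain ⟨m, hm, hnm⟩ := hnall
      have hlt : n < m := by
        by_contra hle
        push_neg at hle
        exact hnm (alshatter_of_le hle hn)
      have := hpot m hm
      omega
  · -- pred = false, label = false : correct round
    refine ⟨⟨hhV, rfl⟩, ?_, ?_, ?_⟩
    · simp only [ALstep, hp, hy]
      simpa using hk1
    · simp [ALstep, hp, hy]
    · intro n hn
      simp only [ALstep, hp, hy] at hn
      simp only [hp, hy]
      norm_num at hn ⊢
      have := hpot n (alshatter_of_sep hn)
      omega

/-- if AL_w(H) < ∞, there is a deterministic full-information realizable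
online learner making at most w - 1 false negative mistakes and at most AL_w(H) false
positive mistakes on any stream labeled by a hypothesis in H. A deterministic learner is
a map from the full-information history (the past labeled examples) and the current
instance to a prediction. -/
theorem exists_constrained_full_info_learner {X : Type*} (H : Set (X → Bool))
    (w : ℕ) (hw : 1 ≤ w) (hfin : ALdim H w ≠ ⊤) :
    ∃ A : List (X × Bool) → X → Bool,
      ∀ h ∈ H, ∀ x : ℕ → X, ∀ T : ℕ,
        (((Finset.range T).filter (fun t =>
            A ((List.range t).map (fun i => (x i, h (x i)))) (x t) = true ∧
              h (x t) = false)).card : ℕ∞) ≤ ALdim H w ∧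
        ((Finset.range T).filter (fun t =>
            A ((List.range t).map (fun i => (x i, h (x i)))) (x t) = false ∧
              h (x t) = true)).card ≤ w - 1 := by
  set d₀ : ℕ := (ALdim H w).toNat with hd₀
  have hbound : ∀ n : ℕ, ALShatter H w n → n ≤ d₀ := by
    intro n hn
    have h1 : (n : ℕ∞) ≤ ALdim H w := le_sSup ⟨n, hn, rfl⟩
    rw [← ENat.coe_toNat hfin] at h1
    exact_mod_cast h1
  refine ⟨ALearner H w, ?_⟩
  intro h hh x
  have key : ∀ T : ℕ,
      h ∈ (ALstate H w ((List.range T).map fun i => (x i, h (x i)))).1 ∧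
      1 ≤ (ALstate H w ((List.range T).map fun i => (x i, h (x i)))).2 ∧
      ((Finset.range T).filter (fun t =>
          ALearner H w ((List.range t).map (fun i => (x i, h (x i)))) (x t) = false ∧
            h (x t) = true)).card
        + (ALstate H w ((List.range T).map fun i => (x i, h (x i)))).2 ≤ w ∧
      ∀ n, ALShatter (ALstate H w ((List.range T).map fun i => (x i, h (x i)))).1
          (ALstate H w ((List.range T).map fun i => (x i, h (x i)))).2 n →
        n + ((Finset.range T).filter (fun t =>
            ALearner H w ((List.range t).map (fun i => (x i, h (x i)))) (x t) = true ∧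
              h (x t) = false)).card ≤ d₀ := by
    intro T
    induction T with
    | zero =>
      refine ⟨?_, ?_, ?_, ?_⟩
      · simpa [ALstate] using hh
      · simpa [ALstate] using hw
      · simp [ALstate]
      · intro n hn
        simp only [ALstate, List.range_zero, List.map_nil, List.foldl_nil] at hn
        simpa using hbound n hn
    | succ T ih =>
      obtain ⟨hhV, hk1, hFN, hpot⟩ := ih
      have hstepT : ALstate H w ((List.range (T+1)).map fun i => (x i, h (x i)))
          = ALstep (ALstate H w ((List.range T).map fun i => (x i, h (x i))))
              (x T, h (x T)) := by
        simp [ALstate, List.range_succ]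
      obtain ⟨hmem, hk1', hkeq, hpot'⟩ := ALstep_key hhV hk1 hpot (xT := x T)
      simp only [Prod.mk.eta] at hmem hk1' hkeq hpot'
      rw [hstepT]
      refine ⟨hmem, hk1', ?_, ?_⟩
      · rw [card_filter_range_succ]
        by_cases hc : ALearner H w ((List.range T).map fun i => (x i, h (x i))) (x T) = false
            ∧ h (x T) = true
        · rw [if_pos hc]
          rw [if_pos (by simpa [ALearner] using hc)] at hkeq
          omega
        · rw [if_neg hc]
          rw [if_neg (by simpa [ALearner] using hc)] at hkeq
          omega
      · intro n hn
        rw [card_filter_range_succ]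
        have hstep4 := hpot' n hn
        by_cases hc : ALearner H w ((List.range T).map fun i => (x i, h (x i))) (x T) = true
            ∧ h (x T) = false
        · rw [if_pos hc]
          rw [if_pos (by simpa [ALearner] using hc)] at hstep4
          omega
        · rw [if_neg hc]
          rw [if_neg (by simpa [ALearner] using hc)] at hstep4
          omega
  intro T
  obtain ⟨hhV, hk1, hFN, hpot⟩ := key T
  constructor
  · have h1 := hpot 0 ((alshatter_zero _ _).mpr ⟨h, hhV⟩)
    have h2 : (((Finset.range T).filter (fun t =>
        ALearner H w ((List.range t).map (fun i => (x i, h (x i)))) (x t) = true ∧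
          h (x t) = false)).card : ℕ∞) ≤ (d₀ : ℕ∞) := by
      exact_mod_cast (by omega : ((Finset.range T).filter (fun t =>
        ALearner H w ((List.range t).map (fun i => (x i, h (x i)))) (x t) = true ∧
          h (x t) = false)).card ≤ d₀)
    calc _ ≤ (d₀ : ℕ∞) := h2
      _ = ALdim H w := ENat.coe_toNat hfin
  · omega
end

section
/- Minimax realizable lower bound for apple tasting: for any hypothesis class H ⊆ {0,1}^X and any randomized apple tasting learner A, there is a realizable stream of length T on which A makes at least (1/8)·sup_{w∈ℕ} √(min{w, L(H), T} · min{AL_w(H), T}) expected mistakes. -/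
open scoped ENNReal NNReal

/-- One run of a randomized apple-tasting learner `A` (a map from the apple-tasting
history — past instances together with the label if it was observed — and the current
instance, to a distribution over predictions) on the stream `x` with true labels `y`:
the distribution, after `t` rounds, of the pair (history, number of mistakes so far).
The label `y t` is recorded (observed) only when the prediction is 1. -/
noncomputable def runAT {X : Type*} (A : List (X × Option Bool) → X → PMF Bool)
    (x : ℕ → X) (y : ℕ → Bool) : ℕ → PMF (List (X × Option Bool) × ℕ)
  | 0 => PMF.pure ([], 0)
  | t + 1 =>
      (runAT A x y t).bind fun s =>
        (A s.1 (x t)).bind fun b =>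
          PMF.pure (s.1 ++ [(x t, if b then some (y t) else none)],
            s.2 + (if b ≠ y t then 1 else 0))

/-- Expected number of mistakes of the randomized apple-tasting learner `A` over `T`
rounds on the stream `x` with true labels `y`. -/
noncomputable def expMistakes {X : Type*} (A : List (X × Option Bool) → X → PMF Bool)
    (x : ℕ → X) (y : ℕ → Bool) (T : ℕ) : ℝ≥0∞ :=
  ∑' s : List (X × Option Bool) × ℕ, runAT A x y T s * s.2

/-!
The adversary walks down a shattered apple tree of width `k = min(w, L(H), T)` and depth `k * s`,
with `s ≈ √(m / k)` and `m = min(AL_w(H), T)`, showing each node's instance for a block of `s`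
consecutive rounds and going right (label `true`) with probability `1 / (2 s)`. Since a label is
revealed only when the learner predicts `1`, a learner that never predicts `1` during a block sees
exactly the same history under both labels: it pays `s` if the label is `true`, while predicting `1`
at least once costs a mistake if the label is `false`. Either way a block costs at least `1 / 2` in
expectation. By Markov's inequality, with probability at least `1 / 2` fewer than `k` right edges
are taken, so the width is never exhausted and all `k * s` blocks are played: at least
`k * s / 4 ≥ √(k m) / 8` expected mistakes in `k * s² ≤ T` rounds, against a stream realized by the
hypothesis at the end of the path.
-/

section Shattering

variable {X : Type*} {H : Set (X → Bool)}

theorem ALShatter.nonempty : ∀ {H : Set (X → Bool)} {w d : ℕ}, ALShatter H w d → H.Nonempty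
  | _, 0, 0, h | _, _ + 1, 0, h | _, 0, _ + 1, h => h
  | _, _ + 1, _ + 1, ⟨_, h, _⟩ => h.nonempty.mono fun _ hf => hf.1

theorem ALShatter.of_nonempty {w : ℕ} (h : H.Nonempty) : ALShatter H w 0 := by
  cases w <;> exact h

theorem ALShatter.mono_depth :
    ∀ {H : Set (X → Bool)} {w d d' : ℕ}, ALShatter H w d → d' ≤ d → ALShatter H w d'
  | _, _, _, 0, h, _ => .of_nonempty h.nonempty
  | _, 0, _ + 1, _ + 1, h, _ => h
  | _, _ + 1, _ + 1, _ + 1, ⟨x, hl, hr⟩, hd =>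
    ⟨x, hl.mono_depth (by omega), hr.mono_depth (by omega)⟩
  | _, _, 0, _ + 1, _, hd => absurd hd (by omega)

theorem ALShatter.mono_width :
    ∀ {H : Set (X → Bool)} {w w' d : ℕ}, ALShatter H w d → w' ≤ w → ALShatter H w' d
  | _, _, _, 0, h, _ => .of_nonempty h.nonempty
  | _, _, 0, _ + 1, h, _ => h.nonempty
  | _, _ + 1, _ + 1, _ + 1, ⟨x, hl, hr⟩, hw =>
    ⟨x, hl.mono_width (by omega), hr.mono_width (by omega)⟩
  | _, 0, _ + 1, _ + 1, _, hw => absurd hw (by omega)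

theorem LShatter.nonempty : ∀ {H : Set (X → Bool)} {d : ℕ}, LShatter H d → H.Nonempty
  | _, 0, h => h
  | _, _ + 1, ⟨_, h, _⟩ => h.nonempty.mono fun _ hf => hf.1

theorem LShatter.alShatter :
    ∀ {H : Set (X → Bool)} {d : ℕ} (w : ℕ), LShatter H d → ALShatter H w d
  | _, 0, _, h => .of_nonempty h
  | _, _ + 1, 0, h => h.nonempty
  | _, _ + 1, _ + 1, ⟨x, hl, hr⟩ => ⟨x, hl.alShatter _, hr.alShatter _⟩

theorem ALShatter.natCast_le_ALdim {w n : ℕ} (h : ALShatter H w n) : (n : ℕ∞) ≤ ALdim H w :=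
  le_sSup ⟨n, h, rfl⟩

theorem ALShatter.of_natCast_le_ALdim {w n : ℕ} (hn : n ≠ 0) (h : (n : ℕ∞) ≤ ALdim H w) :
    ALShatter H w n := by
  by_contra hno
  have hle : ALdim H w ≤ (n - 1 : ℕ) := sSup_le <| by
    rintro _ ⟨k, hk, rfl⟩
    exact_mod_cast (show k ≤ n - 1 by by_contra hkn; exact hno (hk.mono_depth (by omega)))
  have := h.trans hle
  norm_cast at this
  omega

theorem Ldim_le_ALdim (H : Set (X → Bool)) (w : ℕ) : Ldim H ≤ ALdim H w :=
  sSup_le <| by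
    rintro _ ⟨n, hn, rfl⟩
    exact (hn.alShatter w).natCast_le_ALdim

theorem ALShatter.exists_root {w d : ℕ} (h : ALShatter H (w + 1) (d + 1)) :
    ∃ x, ALShatter {f | f ∈ H ∧ f x = false} (w + 1) d ∧
      ALShatter {f | f ∈ H ∧ f x = true} w d :=
  h

noncomputable def ALShatter.root {w d : ℕ} (h : ALShatter H (w + 1) (d + 1)) : X :=
  h.exists_root.choose

theorem ALShatter.child {w d : ℕ} (h : ALShatter H (w + 1) (d + 1)) (b : Bool) :
    ALShatter {f | f ∈ H ∧ f h.root = b} (bif b then w else w + 1) d := by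
  cases b
  exacts [h.exists_root.choose_spec.1, h.exists_root.choose_spec.2]

end Shattering

namespace AppleTasting

open Finset

section Expectation

variable {α β : Type*}

noncomputable def expect (p : PMF α) (f : α → ℝ≥0∞) : ℝ≥0∞ := ∑' a, p a * f a

lemma expect_pure (a : α) (f : α → ℝ≥0∞) : expect (PMF.pure a) f = f a := by
  rw [expect, tsum_eq_single a fun b hb => by simp [PMF.pure_apply, hb]]
  simp

lemma expect_bind (p : PMF α) (g : α → PMF β) (f : β → ℝ≥0∞) :
    expect (p.bind g) f = expect p fun a => expect (g a) f := by
  simp only [expect, PMF.bind_apply, ← ENNReal.tsum_mul_right, ← ENNReal.tsum_mul_left, mul_assoc]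
  exact ENNReal.tsum_comm

lemma expect_bool (p : PMF Bool) (f : Bool → ℝ≥0∞) :
    expect p f = p false * f false + p true * f true :=
  tsum_bool _

lemma expect_mono (p : PMF α) {f g : α → ℝ≥0∞} (h : ∀ a, f a ≤ g a) :
    expect p f ≤ expect p g :=
  ENNReal.tsum_le_tsum fun a => mul_le_mul_right (h a) _

lemma expect_const (p : PMF α) (c : ℝ≥0∞) : expect p (fun _ => c) = c := by
  rw [expect, ENNReal.tsum_mul_right, PMF.tsum_coe, one_mul]

lemma expect_add (p : PMF α) (f g : α → ℝ≥0∞) :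
    expect p (fun a => f a + g a) = expect p f + expect p g := by
  simp only [expect, mul_add, ENNReal.tsum_add]

lemma expect_const_mul (p : PMF α) (c : ℝ≥0∞) (f : α → ℝ≥0∞) :
    expect p (fun a => c * f a) = c * expect p f := by
  simp only [expect, mul_left_comm _ c, ENNReal.tsum_mul_left]

lemma expect_sum {ι : Type*} (p : PMF α) (s : Finset ι) (f : ι → α → ℝ≥0∞) :
    expect p (fun a => ∑ i ∈ s, f i a) = ∑ i ∈ s, expect p (f i) := by
  simp only [expect, Finset.mul_sum]
  exact Summable.tsum_finsetSum fun _ _ => ENNReal.summable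

lemma mul_expect_add_le_expect (p : PMF α) {f g : α → ℝ≥0∞} (c K : ℝ≥0∞)
    (h : ∀ a, c * f a + K ≤ g a) : c * expect p f + K ≤ expect p g := by
  rw [← expect_const_mul, ← expect_const p K, ← expect_add]
  exact expect_mono p h

end Expectation

section Run

variable {X : Type*} (A : List (X × Option Bool) → X → PMF Bool)

abbrev State (X : Type*) := List (X × Option Bool) × ℕ

noncomputable def step (x : X) (y : Bool) (st : State X) : PMF (State X) :=
  (A st.1 x).bind fun b =>
    PMF.pure (st.1 ++ [(x, if b then some y else none)], st.2 + (if b ≠ y then 1 else 0))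

noncomputable def runFrom (x : ℕ → X) (y : ℕ → Bool) (st : State X) : ℕ → PMF (State X)
  | 0 => PMF.pure st
  | t + 1 => (runFrom x y st t).bind (step A (x t) (y t))

noncomputable def mistakesFrom (x : ℕ → X) (y : ℕ → Bool) (st : State X) (n : ℕ) : ℝ≥0∞ :=
  expect (runFrom A x y st n) fun s => s.2

lemma runAT_eq_runFrom (x : ℕ → X) (y : ℕ → Bool) (n : ℕ) :
    runAT A x y n = runFrom A x y ([], 0) n := by
  induction n with
  | zero => rfl
  | succ n ih => rw [runAT, ih]; rfl

lemma expMistakes_eq_mistakesFrom (x : ℕ → X) (y : ℕ → Bool) (n : ℕ) :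
    expMistakes A x y n = mistakesFrom A x y ([], 0) n := by
  rw [mistakesFrom, ← runAT_eq_runFrom]; rfl

lemma runFrom_congr {x x' : ℕ → X} {y y' : ℕ → Bool} (st : State X) {n : ℕ}
    (hx : ∀ t < n, x t = x' t) (hy : ∀ t < n, y t = y' t) :
    runFrom A x y st n = runFrom A x' y' st n := by
  induction n with
  | zero => rfl
  | succ n ih =>
    rw [runFrom, runFrom, ih (fun t ht => hx t (by omega)) (fun t ht => hy t (by omega)),
      hx n n.lt_succ_self, hy n n.lt_succ_self]

lemma runFrom_add (x : ℕ → X) (y : ℕ → Bool) (st : State X) (m n : ℕ) :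
    runFrom A x y st (m + n) =
      (runFrom A x y st m).bind fun s =>
        runFrom A (fun t => x (m + t)) (fun t => y (m + t)) s n := by
  induction n with
  | zero => simp [runFrom]
  | succ n ih => rw [← add_assoc, runFrom, ih, PMF.bind_bind]; rfl

lemma mistakesFrom_add (x : ℕ → X) (y : ℕ → Bool) (st : State X) (m n : ℕ) :
    mistakesFrom A x y st (m + n) =
      expect (runFrom A x y st m) fun s =>
        mistakesFrom A (fun t => x (m + t)) (fun t => y (m + t)) s n := by
  rw [mistakesFrom, runFrom_add, expect_bind]; rfl

lemma expect_step (x : X) (y : Bool) (st : State X) (f : State X → ℝ≥0∞) :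
    expect (step A x y st) f =
      A st.1 x false * f (st.1 ++ [(x, none)], st.2 + if y then 1 else 0) +
        A st.1 x true * f (st.1 ++ [(x, some y)], st.2 + if y then 0 else 1) := by
  rw [step, expect_bind, expect_bool]
  cases y <;> simp [expect_pure]

lemma mistakesFrom_le_succ (x : ℕ → X) (y : ℕ → Bool) (st : State X) (n : ℕ) :
    mistakesFrom A x y st n ≤ mistakesFrom A x y st (n + 1) := by
  rw [mistakesFrom, mistakesFrom, runFrom, expect_bind]
  refine expect_mono _ fun s => ?_
  rw [expect_step, ← one_mul (s.2 : ℝ≥0∞), ← PMF.tsum_coe (A s.1 (x n)), tsum_bool, add_mul]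
  gcongr <;> simp

lemma mistakesFrom_mono (x : ℕ → X) (y : ℕ → Bool) (st : State X) :
    Monotone (mistakesFrom A x y st) :=
  monotone_nat_of_le_succ (mistakesFrom_le_succ A x y st)

lemma count_le_mistakesFrom (x : ℕ → X) (y : ℕ → Bool) (st : State X) (n : ℕ) :
    (st.2 : ℝ≥0∞) ≤ mistakesFrom A x y st n := by
  simpa [mistakesFrom, runFrom, expect_pure] using mistakesFrom_mono A x y st (Nat.zero_le n)

end Run

section Block

variable {X : Type*} (A : List (X × Option Bool) → X → PMF Bool)

/-- The probability that `A`, shown `xr` in `c` consecutive rounds after the history `hist`,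
never predicts `1`; no label is revealed on that path, so it does not depend on the true label. -/
noncomputable def noTasteProb (xr : X) (hist : List (X × Option Bool)) (c : ℕ) : ℝ≥0∞ :=
  ∏ j ∈ range c, A (hist ++ List.replicate j (xr, none)) xr false

lemma noTasteProb_le_one (xr : X) (hist : List (X × Option Bool)) (c : ℕ) :
    noTasteProb A xr hist c ≤ 1 :=
  prod_le_one' fun _ _ => PMF.coe_le_one _ _

lemma noTasteProb_succ (xr : X) (hist : List (X × Option Bool)) (c : ℕ) :
    noTasteProb A xr hist (c + 1) =
      A hist xr false * noTasteProb A xr (hist ++ [(xr, none)]) c := by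
  simp [noTasteProb, prod_range_succ', List.replicate_succ, mul_comm]

lemma mistakesFrom_const_succ (xr : X) (y : Bool) (st : State X) (c : ℕ) :
    mistakesFrom A (fun _ => xr) (fun _ => y) st (c + 1) =
      expect (step A xr y st) fun s => mistakesFrom A (fun _ => xr) (fun _ => y) s c := by
  rw [add_comm, mistakesFrom_add]
  simp [runFrom, PMF.pure_bind]

lemma count_add_mul_noTasteProb_le_mistakesFrom_true (xr : X) (c : ℕ) (st : State X) :
    st.2 + c * noTasteProb A xr st.1 c ≤ mistakesFrom A (fun _ => xr) (fun _ => true) st c := by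
  induction c generalizing st with
  | zero => simpa using count_le_mistakesFrom A _ _ st 0
  | succ c ih =>
    rw [mistakesFrom_const_succ, expect_step, noTasteProb_succ]
    simp only [if_true, add_zero]
    set a := noTasteProb A xr (st.1 ++ [(xr, none)]) c
    have ha : a ≤ 1 := noTasteProb_le_one A xr _ c
    have hsum : A st.1 xr false + A st.1 xr true = 1 := by
      rw [← tsum_bool, PMF.tsum_coe]
    calc (st.2 : ℝ≥0∞) + (c + 1 : ℕ) * (A st.1 xr false * a)
        ≤ (A st.1 xr false + A st.1 xr true) * st.2 + A st.1 xr false * (1 + c * a) := by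
          rw [hsum, one_mul, Nat.cast_succ, mul_left_comm, add_mul, one_mul, add_comm (↑c * a)]
          gcongr
      _ = A st.1 xr false * ((st.2 + 1 : ℕ) + c * a) + A st.1 xr true * st.2 := by
          push_cast; ring
      _ ≤ _ := by
          gcongr
          exacts [ih _, count_le_mistakesFrom A _ _ _ c]

lemma count_add_one_le_mistakesFrom_false_add_noTasteProb (xr : X) (c : ℕ) (st : State X) :
    st.2 + 1 ≤ mistakesFrom A (fun _ => xr) (fun _ => false) st c + noTasteProb A xr st.1 c := by
  induction c generalizing st with
  | zero => simpa [noTasteProb] using count_le_mistakesFrom A _ _ st 0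
  | succ c ih =>
    rw [mistakesFrom_const_succ, expect_step, noTasteProb_succ]
    simp only [Bool.false_eq_true, if_false, add_zero]
    have hsum : A st.1 xr false + A st.1 xr true = 1 := by
      rw [← tsum_bool, PMF.tsum_coe]
    calc (st.2 : ℝ≥0∞) + 1
        = A st.1 xr false * (st.2 + 1) + A st.1 xr true * (st.2 + 1 : ℕ) := by
          push_cast; rw [← add_mul, hsum, one_mul]
      _ ≤ A st.1 xr false * (mistakesFrom A (fun _ => xr) (fun _ => false)
              (st.1 ++ [(xr, none)], st.2) c + noTasteProb A xr (st.1 ++ [(xr, none)]) c) +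
            A st.1 xr true * mistakesFrom A (fun _ => xr) (fun _ => false)
              (st.1 ++ [(xr, some false)], st.2 + 1) c := by
          gcongr _ * ?_ + _ * ?_
          exacts [ih _, count_le_mistakesFrom A _ _ _ c]
      _ = _ := by ring

/-- Abstaining on all `s` rounds costs `s` under the label `true`, while tasting at least once
costs `1` under the label `false`. -/
lemma mul_count_add_le_mistakesFrom_true_add_mul_false (xr : X) {s m : ℕ} (hsm : s ≤ m)
    (st : State X) :
    (m + 1 : ℕ) * st.2 + s ≤ mistakesFrom A (fun _ => xr) (fun _ => true) st s +
      m * mistakesFrom A (fun _ => xr) (fun _ => false) st s := by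
  set a := noTasteProb A xr st.1 s
  have ha : a ≤ 1 := noTasteProb_le_one A xr st.1 s
  have hma : (m : ℝ≥0∞) * a ≠ ⊤ :=
    ENNReal.mul_ne_top (by simp) (ne_top_of_le_ne_top ENNReal.one_ne_top ha)
  obtain ⟨r, rfl⟩ := Nat.exists_eq_add_of_le hsm
  refine ENNReal.le_of_add_le_add_right hma ?_
  calc ((s + r + 1 : ℕ) : ℝ≥0∞) * st.2 + s + (s + r : ℕ) * a
      ≤ (st.2 + s * a) + (s + r : ℕ) * (st.2 + 1) := by
        push_cast
        have : (r : ℝ≥0∞) * a ≤ r := mul_le_of_le_one_right' ha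
        calc _ = (st.2 + s * a) + (s + r) * st.2 + s + r * a := by ring
          _ ≤ (st.2 + s * a) + (s + r) * st.2 + s + r := by gcongr
          _ = _ := by ring
    _ ≤ mistakesFrom A (fun _ => xr) (fun _ => true) st s +
          (s + r : ℕ) * (mistakesFrom A (fun _ => xr) (fun _ => false) st s + a) := by
        gcongr ?_ + _ * ?_
        exacts [count_add_mul_noTasteProb_le_mistakesFrom_true A xr s st,
          count_add_one_le_mistakesFrom_false_add_noTasteProb A xr s st]
    _ = _ := by ring

end Block

section Counting

variable {V : Type*}

lemma sum_pi_fin_succ [Fintype V] {M : Type*} [AddCommMonoid M] {d : ℕ}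
    (F : (Fin (d + 1) → V) → M) :
    ∑ σ, F σ = ∑ c, ∑ σ', F (Fin.cons c σ') := by
  rw [← (Fin.consEquiv fun _ => V).sum_comp, Fintype.sum_prod_type]
  rfl

variable [DecidableEq V] (v₀ : V)

lemma sum_decide_eq [Fintype V] {M : Type*} [AddCommMonoid M] (g : Bool → M) :
    ∑ c : V, g (decide (c = v₀)) = g true + (Fintype.card V - 1) • g false := by
  have hcompl : ∀ c ∈ ({v₀}ᶜ : Finset V), g (decide (c = v₀)) = g false := fun c hc => by
    simp_all
  rw [Fintype.sum_eq_add_sum_compl v₀, sum_congr rfl hcompl, sum_const, card_compl,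
    card_singleton, decide_eq_true rfl]

/-- A coordinate `σ i = v₀` is a right edge and uses up one unit of width; `activeBlocks` counts
the blocks played before the width is exhausted. -/
def activeBlocks : (d w : ℕ) → (Fin d → V) → ℕ
  | 0, _, _ => 0
  | _ + 1, 0, _ => 0
  | d + 1, w + 1, σ => 1 + activeBlocks d (bif decide (σ 0 = v₀) then w else w + 1) (Fin.tail σ)

lemma activeBlocks_eq_of_card_lt :
    ∀ {d w : ℕ} (σ : Fin d → V), #{i | σ i = v₀} < w → activeBlocks v₀ d w σ = d
  | 0, _, _, _ => rfl
  | _ + 1, 0, _, h => absurd h (Nat.not_lt_zero _)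
  | d + 1, w + 1, σ, h => by
    have h' : (if σ 0 = v₀ then 1 else 0) + #{i | Fin.tail σ i = v₀} < w + 1 := by
      rwa [Fin.card_filter_univ_succ'] at h
    rw [activeBlocks, activeBlocks_eq_of_card_lt (Fin.tail σ), add_comm]
    by_cases h0 : σ 0 = v₀ <;> simp only [h0, if_true, if_false] at h' <;> simp [h0] <;> omega

lemma sum_card_filter_eq [Fintype V] (d : ℕ) :
    ∑ σ : Fin d → V, #{i | σ i = v₀} = d * Fintype.card V ^ (d - 1) := by
  calc ∑ σ : Fin d → V, #{i | σ i = v₀} = ∑ i : Fin d, #{σ : Fin d → V | σ i = v₀} := by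
        simp only [card_filter]; exact sum_comm
    _ = ∑ _i : Fin d, Fintype.card V ^ (d - 1) := by
        refine sum_congr rfl fun i _ => ?_
        simpa [Fintype.piFinset_univ] using
          Fintype.card_filter_piFinset_const_eq_of_mem (univ : Finset V) i (mem_univ v₀)
    _ = _ := by simp

/-- Markov's inequality for the number of `v₀`-coordinates: fewer than `w` of them, hence all `d`
blocks active, for at least half of all `σ`. -/
lemma mul_card_pow_le_two_mul_sum_activeBlocks [Fintype V] {d w : ℕ}
    (hd : 2 * d ≤ w * Fintype.card V) :
    d * Fintype.card V ^ d ≤ 2 * ∑ σ : Fin d → V, activeBlocks v₀ d w σ := by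
  rcases Nat.eq_zero_or_pos d with rfl | hd0
  · simp
  set n := Fintype.card V
  set bad : Finset (Fin d → V) := {σ | w ≤ #{i | σ i = v₀}}
  have hbad : w * #bad ≤ d * n ^ (d - 1) := by
    rw [← sum_card_filter_eq v₀ d, mul_comm, ← smul_eq_mul]
    calc #bad • w ≤ ∑ σ ∈ bad, #{i | σ i = v₀} := card_nsmul_le_sum _ _ _ fun σ hσ => by
          simpa [bad] using hσ
      _ ≤ _ := sum_le_sum_of_subset (subset_univ _)
  have hgood : d * (n ^ d - #bad) ≤ ∑ σ, activeBlocks v₀ d w σ := by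
    calc d * (n ^ d - #bad) = ∑ _σ ∈ badᶜ, d := by simp [card_compl, n, mul_comm]
      _ = ∑ σ ∈ badᶜ, activeBlocks v₀ d w σ := sum_congr rfl fun σ hσ =>
          (activeBlocks_eq_of_card_lt v₀ σ (by simpa [bad] using hσ)).symm
      _ ≤ _ := sum_le_sum_of_subset (subset_univ _)
  have hwn : 0 < w * n := by omega
  have h2bad : 2 * #bad ≤ n ^ d := by
    refine Nat.le_of_mul_le_mul_right ?_ hwn
    calc 2 * #bad * (w * n) = 2 * (w * #bad) * n := by ring
      _ ≤ 2 * (d * n ^ (d - 1)) * n := by gcongr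
      _ = 2 * d * n ^ d := by
          rw [mul_assoc 2, mul_assoc, ← pow_succ, Nat.sub_add_cancel hd0, mul_assoc]
      _ ≤ n ^ d * (w * n) := by rw [mul_comm (n ^ d)]; gcongr
  calc d * n ^ d ≤ d * (2 * (n ^ d - #bad)) := by gcongr; omega
    _ = 2 * (d * (n ^ d - #bad)) := by ring
    _ ≤ _ := by gcongr

lemma sum_activeBlocks_succ_succ [Fintype V] (d w : ℕ) :
    ∑ σ : Fin (d + 1) → V, activeBlocks v₀ (d + 1) (w + 1) σ =
      Fintype.card V ^ (d + 1) + ∑ σ, activeBlocks v₀ d w σ +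
        (Fintype.card V - 1) * ∑ σ, activeBlocks v₀ d (w + 1) σ := by
  have hpow : Fintype.card V ^ (d + 1) = (Fintype.card V - 1 + 1) * Fintype.card V ^ d := by
    rw [pow_succ', Nat.sub_add_cancel (Fintype.card_pos_iff.2 ⟨v₀⟩)]
  rw [sum_pi_fin_succ]
  simp only [activeBlocks, Fin.cons_zero, Fin.tail_cons]
  rw [sum_decide_eq v₀ fun b => ∑ σ, (1 + activeBlocks v₀ d (bif b then w else w + 1) σ)]
  simp only [sum_add_distrib, sum_const, card_univ, Fintype.card_fun, Fintype.card_fin,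
    smul_eq_mul, mul_one, hpow, cond_true, cond_false]
  ring

end Counting

section Adversary

variable {X V : Type*} (A : List (X × Option Bool) → X → PMF Bool)

def prependBlock (s : ℕ) (xr : X) (I : (ℕ → X) × (X → Bool)) : (ℕ → X) × (X → Bool) :=
  (fun t => if t < s then xr else I.1 (t - s), I.2)

noncomputable def mistakesOn (I : (ℕ → X) × (X → Bool)) (st : State X) (n : ℕ) : ℝ≥0∞ :=
  mistakesFrom A I.1 (fun t => I.2 (I.1 t)) st n

lemma mistakesOn_prependBlock (s : ℕ) (xr : X) (I : (ℕ → X) × (X → Bool)) (st : State X) (n : ℕ) :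
    mistakesOn A (prependBlock s xr I) st (s + n) =
      expect (runFrom A (fun _ => xr) (fun _ => I.2 xr) st s) fun st' => mistakesOn A I st' n := by
  rw [mistakesOn, mistakesFrom_add]
  congr 1
  · exact runFrom_congr A st (fun t ht => if_pos ht) (fun t ht => by simp [prependBlock, ht])
  · funext st'
    simp [mistakesOn, prependBlock]

lemma card_pow_mul_le_sum_mistakesOn [Fintype V] {d : ℕ} (F : (Fin d → V) → (ℕ → X) × (X → Bool))
    (st : State X) (n : ℕ) :
    (Fintype.card V : ℝ≥0∞) ^ d * st.2 ≤ ∑ σ, mistakesOn A (F σ) st n :=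
  calc (Fintype.card V : ℝ≥0∞) ^ d * st.2 = ∑ _σ : Fin d → V, (st.2 : ℝ≥0∞) := by simp
    _ ≤ _ := sum_le_sum fun σ _ => count_le_mistakesFrom A _ _ st n

variable [DecidableEq V] (s : ℕ) (v₀ : V) (x₀ : X)

/-- Block `i` shows the current node `s` times and then moves to its right child (label `true`)
if `σ i = v₀`, to its left child otherwise; after a leaf the stream is padded with `x₀`. -/
noncomputable def adversary : (d : ℕ) → (H : Set (X → Bool)) → (w : ℕ) → ALShatter H w d →
    (Fin d → V) → (ℕ → X) × (X → Bool)
  | 0, _, _, h, _ => (fun _ => x₀, h.nonempty.some)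
  | _ + 1, _, 0, h, _ => (fun _ => x₀, h.nonempty.some)
  | d + 1, _, _ + 1, h, σ =>
    prependBlock s h.root (adversary d _ _ (h.child (decide (σ 0 = v₀))) (Fin.tail σ))

lemma adversary_mem : ∀ {d : ℕ} {H : Set (X → Bool)} {w : ℕ} (h : ALShatter H w d)
    (σ : Fin d → V), (adversary s v₀ x₀ d H w h σ).2 ∈ H
  | 0, _, _, h, _ => h.nonempty.some_mem
  | _ + 1, _, 0, h, _ => h.nonempty.some_mem
  | _ + 1, _, _ + 1, h, σ => (adversary_mem (h.child _) (Fin.tail σ)).1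

lemma adversary_succ_cons {d : ℕ} {H : Set (X → Bool)} {w : ℕ} (h : ALShatter H (w + 1) (d + 1))
    (c : V) (σ : Fin d → V) :
    adversary s v₀ x₀ (d + 1) H (w + 1) h (Fin.cons c σ) =
      prependBlock s h.root (adversary s v₀ x₀ d _ _ (h.child (decide (c = v₀))) σ) :=
  rfl

lemma sum_mistakesOn_adversary_succ [Fintype V] {d : ℕ} {H : Set (X → Bool)} {w : ℕ}
    (h : ALShatter H (w + 1) (d + 1)) (st : State X) :
    ∑ σ, mistakesOn A (adversary s v₀ x₀ (d + 1) H (w + 1) h σ) st (s * (d + 1)) =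
      ∑ c : V, expect (runFrom A (fun _ => h.root) (fun _ => decide (c = v₀)) st s) fun st' =>
        ∑ σ, mistakesOn A (adversary s v₀ x₀ d _ _ (h.child (decide (c = v₀))) σ) st' (s * d) := by
  rw [sum_pi_fin_succ]
  refine sum_congr rfl fun c _ => ?_
  rw [expect_sum]
  refine sum_congr rfl fun σ _ => ?_
  rw [adversary_succ_cons, Nat.mul_succ, add_comm (s * d), mistakesOn_prependBlock,
    (adversary_mem s v₀ x₀ (h.child _) σ).2]

/-- Divided by `|V| ^ (d + 1)`: on average over `σ`, every active block costs at least
`s / |V|` expected mistakes. -/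
theorem card_pow_mul_add_le_card_mul_sum_mistakesOn [Fintype V] (hs : s < Fintype.card V) :
    ∀ (d : ℕ) (H : Set (X → Bool)) (w : ℕ) (h : ALShatter H w d) (st : State X),
      (Fintype.card V : ℝ≥0∞) ^ (d + 1) * st.2 + s * (∑ σ, activeBlocks v₀ d w σ : ℕ) ≤
        Fintype.card V * ∑ σ, mistakesOn A (adversary s v₀ x₀ d H w h σ) st (s * d)
  | 0, _, _, h, st | _ + 1, _, 0, h, st => by
    simp only [activeBlocks, sum_const_zero, Nat.cast_zero, mul_zero, add_zero]
    rw [pow_succ', mul_assoc]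
    exact mul_le_mul_right (card_pow_mul_le_sum_mistakesOn A (adversary s v₀ x₀ _ _ _ h) st _) _
  | d + 1, H, w + 1, h, st => by
    set n := Fintype.card V
    set m := n - 1
    have hn : ((m + 1 : ℕ) : ℝ≥0∞) = n := by congr 1; omega
    set g : Bool → ℝ≥0∞ := fun b => expect (runFrom A (fun _ => h.root) (fun _ => b) st s)
      fun st' => ∑ σ, mistakesOn A (adversary s v₀ x₀ d _ _ (h.child b) σ) st' (s * d)
    set N : Bool → ℕ := fun b => ∑ σ, activeBlocks v₀ d (bif b then w else w + 1) σ
    have hsplitM : ∑ σ, mistakesOn A (adversary s v₀ x₀ (d + 1) H (w + 1) h σ) st (s * (d + 1)) =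
        g true + m • g false := by
      rw [← sum_decide_eq v₀ g]
      exact sum_mistakesOn_adversary_succ A s v₀ x₀ h st
    have hsplitN : ∑ σ, activeBlocks v₀ (d + 1) (w + 1) σ = n ^ (d + 1) + N true + m * N false :=
      sum_activeBlocks_succ_succ v₀ d w
    have hbranch : ∀ b, (n : ℝ≥0∞) ^ (d + 1) * mistakesFrom A (fun _ => h.root) (fun _ => b) st s
        + s * N b ≤ n * g b := fun b => by
      rw [← expect_const_mul]
      exact mul_expect_add_le_expect _ _ _ fun st' =>
        card_pow_mul_add_le_card_mul_sum_mistakesOn hs d _ _ (h.child b) st'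
    calc (n : ℝ≥0∞) ^ (d + 1 + 1) * st.2 + s * (∑ σ, activeBlocks v₀ (d + 1) (w + 1) σ : ℕ)
        = n ^ (d + 1) * ((m + 1 : ℕ) * st.2 + s) + s * N true + m * (s * N false) := by
          rw [hsplitN, hn]; push_cast; ring
      _ ≤ n ^ (d + 1) * (mistakesFrom A (fun _ => h.root) (fun _ => true) st s +
            m * mistakesFrom A (fun _ => h.root) (fun _ => false) st s) +
            s * N true + m * (s * N false) := by
          gcongr _ * ?_ + _ + _
          exact mul_count_add_le_mistakesFrom_true_add_mul_false A h.root (by omega) st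
      _ = (n ^ (d + 1) * mistakesFrom A (fun _ => h.root) (fun _ => true) st s + s * N true) +
            m * (n ^ (d + 1) * mistakesFrom A (fun _ => h.root) (fun _ => false) st s +
              s * N false) := by ring
      _ ≤ n * g true + m * (n * g false) := by gcongr <;> apply hbranch
      _ = _ := by rw [hsplitM, nsmul_eq_mul]; ring

lemma sum_mistakesOn_adversary_le_card_pow_mul_iSup [Fintype V] {d T : ℕ} {H : Set (X → Bool)}
    {w : ℕ} (h : ALShatter H w d) (hT : s * d ≤ T) :
    ∑ σ, mistakesOn A (adversary s v₀ x₀ d H w h σ) ([], 0) (s * d) ≤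
      (Fintype.card V : ℝ≥0∞) ^ d * ⨆ f ∈ H, ⨆ x : ℕ → X, expMistakes A x (fun t => f (x t)) T := by
  refine (sum_le_card_nsmul univ _
    (⨆ f ∈ H, ⨆ x : ℕ → X, expMistakes A x (fun t => f (x t)) T) fun σ _ => ?_).trans_eq (by simp)
  set I := adversary s v₀ x₀ d H w h σ
  calc mistakesOn A I ([], 0) (s * d) ≤ expMistakes A I.1 (fun t => I.2 (I.1 t)) T := by
        rw [expMistakes_eq_mistakesFrom]; exact mistakesFrom_mono A _ _ _ hT
    _ ≤ _ := le_iSup₂_of_le I.2 (adversary_mem s v₀ x₀ h σ)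
        (le_iSup (fun x : ℕ → X => expMistakes A x (fun t => I.2 (x t)) T) I.1)

end Adversary

section LowerBound

variable {X : Type*}

theorem exists_blockLength {k m : ℕ} (hk : 0 < k) (hkm : k ≤ m) :
    ∃ s, 0 < s ∧ k * (s * s) ≤ m ∧ m ≤ 4 * (k * (s * s)) := by
  set q := m / k
  have hq : 0 < q := Nat.div_pos hkm hk
  refine ⟨Nat.sqrt q, Nat.sqrt_pos.2 hq, ?_, ?_⟩
  · calc k * (Nat.sqrt q * Nat.sqrt q) ≤ k * q := Nat.mul_le_mul_left k (Nat.sqrt_le q)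
      _ ≤ m := Nat.mul_div_le m k
  · have hsq : q + 1 ≤ (Nat.sqrt q + 1) * (Nat.sqrt q + 1) := Nat.lt_succ_sqrt q
    have hs : 1 ≤ Nat.sqrt q := Nat.sqrt_pos.2 hq
    calc m ≤ k * (q + 1) := (Nat.lt_mul_div_succ m hk).le
      _ ≤ k * ((Nat.sqrt q + 1) * (Nat.sqrt q + 1)) := Nat.mul_le_mul_left k hsq
      _ ≤ k * (4 * (Nat.sqrt q * Nat.sqrt q)) := Nat.mul_le_mul_left k (by nlinarith)
      _ = 4 * (k * (Nat.sqrt q * Nat.sqrt q)) := by ring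

theorem mul_le_four_mul_iSup_expMistakes (A : List (X × Option Bool) → X → PMF Bool)
    {H : Set (X → Bool)} {k s T : ℕ} (hk : 0 < k) (hs : 0 < s) (hT : s * (k * s) ≤ T)
    (h : ALShatter H k (k * s)) :
    (k * s : ℕ) ≤ 4 * ⨆ f ∈ H, ⨆ x : ℕ → X, expMistakes A x (fun t => f (x t)) T := by
  set S := ⨆ f ∈ H, ⨆ x : ℕ → X, expMistakes A x (fun t => f (x t)) T
  obtain ⟨x₀⟩ : Nonempty X := by
    obtain ⟨k', rfl⟩ : ∃ k', k = k' + 1 := ⟨k - 1, by omega⟩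
    exact ⟨(h.mono_depth (d' := 0 + 1) (Nat.mul_pos hk hs)).root⟩
  let v₀ : Fin (2 * s) := ⟨0, by omega⟩
  have hcard : Fintype.card (Fin (2 * s)) = 2 * s := Fintype.card_fin _
  have hsum := card_pow_mul_add_le_card_mul_sum_mistakesOn A s v₀ x₀ (by omega) _ H k h ([], 0)
  have hcount := mul_card_pow_le_two_mul_sum_activeBlocks v₀ (d := k * s) (w := k)
    (by rw [hcard, mul_left_comm])
  have hsup := sum_mistakesOn_adversary_le_card_pow_mul_iSup A s v₀ x₀ h hT
  rw [hcard] at hsum hcount hsup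
  simp only [Nat.cast_zero, mul_zero, zero_add] at hsum
  set N := ∑ σ, activeBlocks v₀ (k * s) k σ
  set Q := (2 * s) ^ (k * s)
  have hsQ : ((s * Q : ℕ) : ℝ≥0∞) ≠ 0 := by simp [Q]; omega
  refine (ENNReal.mul_le_mul_iff_right hsQ (ENNReal.natCast_ne_top _)).1 ?_
  calc ((s * Q : ℕ) : ℝ≥0∞) * (k * s : ℕ) = s * (k * s * Q : ℕ) := by push_cast; ring
    _ ≤ s * (2 * N : ℕ) := by gcongr
    _ = 2 * (s * N) := by push_cast; ring
    _ ≤ 2 * ((2 * s : ℕ) * (Q * S)) := by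
        gcongr 2 * ?_
        exact hsum.trans (by gcongr; simpa [Q] using hsup)
    _ = (s * Q : ℕ) * (4 * S) := by push_cast; ring

theorem ofReal_sqrt_mul_div_eight_le {k m s : ℕ} (hm : m ≤ 4 * (k * (s * s))) :
    ENNReal.ofReal (1 / 8 * √((k : ℝ) * m)) ≤ (k * s : ℕ) / 4 := by
  have hsqrt : √((k : ℝ) * m) ≤ 2 * (k * s : ℕ) := by
    rw [Real.sqrt_le_left (by positivity)]
    exact_mod_cast (by nlinarith : k * m ≤ (2 * (k * s)) ^ 2)
  calc ENNReal.ofReal (1 / 8 * √((k : ℝ) * m)) ≤ ENNReal.ofReal ((k * s : ℕ) / 4) := by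
        gcongr; linarith
    _ = (k * s : ℕ) / 4 := by
        rw [ENNReal.ofReal_div_of_pos (by norm_num), ENNReal.ofReal_natCast]; norm_num

end LowerBound

end AppleTasting

theorem apple_tasting_realizable_lower_bound_general {X : Type*} (H : Set (X → Bool)) (T : ℕ)
    (A : List (X × Option Bool) → X → PMF Bool) (w : ℕ) :
    ENNReal.ofReal ((1 / 8) * Real.sqrt
        (((min (w : ℕ∞) (min (Ldim H) (T : ℕ∞))).toNat : ℝ) *
          ((min (ALdim H w) (T : ℕ∞)).toNat : ℝ)))
      ≤ ⨆ h ∈ H, ⨆ x : ℕ → X, expMistakes A x (fun t => h (x t)) T := by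
  set k := (min (w : ℕ∞) (min (Ldim H) (T : ℕ∞))).toNat
  set m := (min (ALdim H w) (T : ℕ∞)).toNat
  rcases Nat.eq_zero_or_pos k with hk | hk
  · simp [hk]
  rcases Nat.eq_zero_or_pos m with hm | hm
  · simp [hm]
  have hkcast : (k : ℕ∞) = min (w : ℕ∞) (min (Ldim H) T) :=
    ENat.natCast_toNat (ne_top_of_le_ne_top (ENat.natCast_ne_top w) (min_le_left _ _))
  have hmcast : (m : ℕ∞) = min (ALdim H w) T :=
    ENat.natCast_toNat (ne_top_of_le_ne_top (ENat.natCast_ne_top T) (min_le_right _ _))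
  have hkw : k ≤ w := by exact_mod_cast hkcast.trans_le (min_le_left _ _)
  have hkm : k ≤ m := by
    exact_mod_cast (hkcast.trans_le (min_le_right _ _)).trans
      ((min_le_min_right _ (Ldim_le_ALdim H w)).trans_eq hmcast.symm)
  have hmT : m ≤ T := by exact_mod_cast hmcast.trans_le (min_le_right _ _)
  obtain ⟨s, hs, hksm, hmks⟩ := AppleTasting.exists_blockLength hk hkm
  have hsh : ALShatter H k (k * s) :=
    ((ALShatter.of_natCast_le_ALdim hm.ne' (hmcast.trans_le (min_le_left _ _))).mono_width
      hkw).mono_depth (by nlinarith)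
  calc _ ≤ ((k * s : ℕ) : ℝ≥0∞) / 4 := AppleTasting.ofReal_sqrt_mul_div_eight_le hmks
    _ ≤ _ := ENNReal.div_le_of_le_mul'
        (AppleTasting.mul_le_four_mul_iSup_expMistakes A hk hs (by nlinarith) hsh)

/-- minimax realizable lower bound for apple tasting. For every randomized
apple-tasting learner A and every width w, the worst-case (over hypotheses h ∈ H and
streams x) expected number of mistakes over T rounds is at least
(1/8)·√(min{w, L(H), T} · min{AL_w(H), T}); hence it is at least
(1/8)·sup_w √(min{w, L(H), T} · min{AL_w(H), T}). -/
theorem apple_tasting_realizable_lower_bound {X : Type*} (H : Set (X → Bool)) (T : ℕ)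
    (A : List (X × Option Bool) → X → PMF Bool) (w : ℕ) (hw : 1 ≤ w) :
    ENNReal.ofReal ((1 / 8) * Real.sqrt
        (((min (w : ℕ∞) (min (Ldim H) (T : ℕ∞))).toNat : ℝ) *
          ((min (ALdim H w) (T : ℕ∞)).toNat : ℝ)))
      ≤ ⨆ h ∈ H, ⨆ x : ℕ → X, expMistakes A x (fun t => h (x t)) T :=
  apple_tasting_realizable_lower_bound_general H T A w
end
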